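/- Let b > 0, M > 0, and let A_k, B_k : [0,b] → ℝ^{n×n} be measurable matrix-valued functions bounded by M, converging weakly-star in L∞ to A and B respectively. Let p_k : [0,b] → ℝ^n solve the linear ODE ṗ_k(t) = −A_k(t)ᵀ p_k(t) − B_k(t)ᵀ p_k(t) with terminal condition p_k(b) = ψ_k, where ψ_k → ψ in ℝ^n. Then p_k converges uniformly on [0,b] to the solution p of ṗ(t) = −A(t)ᵀ p(t) − B(t)ᵀ p(t), p(b) = ψ. -/

import Mathlib

open MeasureTheory Filter

private lemma int_pow_aux (t b : ℝ) (j : ℕ) :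
    ∫ s in t..b, (b - s) ^ j = (b - t) ^ (j + 1) / (j + 1) := by
  have h := intervalIntegral.integral_comp_sub_left (a := t) (b := b) (fun x => x ^ j) b
  simp only [sub_self] at h
  rw [h, integral_pow]
  simp
private lemma fact_term_aux (L x : ℝ) (j : ℕ) :
    (L * x) ^ (j + 1) / ((j+1).factorial : ℝ)
      = L * (L ^ j / (j.factorial : ℝ) * (x ^ (j+1) / ((j:ℝ)+1))) := by
  have h1 : (j.factorial : ℝ) ≠ 0 := Nat.cast_ne_zero.mpr j.factorial_ne_zero
  have h2 : ((j:ℝ)+1) ≠ 0 := by positivity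
  rw [Nat.factorial_succ, mul_pow]
  push_cast
  rw [div_eq_iff (by positivity)]
  field_simp
  ring

private lemma my_gronwall {b c L S : ℝ} (hb : 0 ≤ b) (hc : 0 ≤ c) (hL : 0 ≤ L) (hS : 0 ≤ S)
    (e : ℝ → ℝ) (hint : IntegrableOn e (Set.Icc 0 b))
    (hSb : ∀ t ∈ Set.Icc 0 b, e t ≤ S)
    (hineq : ∀ t ∈ Set.Icc 0 b, e t ≤ c + L * ∫ s in t..b, e s) :
    ∀ t ∈ Set.Icc 0 b, e t ≤ c * Real.exp (L * b) := by
  have key : ∀ m : ℕ, ∀ t ∈ Set.Icc 0 b,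
      e t ≤ c * (∑ j ∈ Finset.range m, (L * (b - t)) ^ j / (j.factorial : ℝ))
            + S * (L * (b - t)) ^ m / (m.factorial : ℝ) := by
    intro m
    induction m with
    | zero => intro t ht; simpa using hSb t ht
    | succ m ih =>
      intro t ht
      obtain ⟨ht0, htb⟩ := ht
      have hbt : 0 ≤ b - t := by linarith
      set g : ℝ → ℝ := fun s =>
        c * (∑ j ∈ Finset.range m, (L * (b - s)) ^ j / (j.factorial : ℝ))
          + S * (L * (b - s)) ^ m / (m.factorial : ℝ) with hg
      have hgc1 : Continuous fun s : ℝ =>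
          c * (∑ j ∈ Finset.range m, (L * (b - s)) ^ j / (j.factorial : ℝ)) :=
        continuous_const.mul (continuous_finset_sum _ (fun j _ =>
          (((continuous_const.mul (continuous_const.sub continuous_id)).pow j).div_const _)))
      have hgc2 : Continuous fun s : ℝ =>
          S * (L * (b - s)) ^ m / (m.factorial : ℝ) :=
        ((continuous_const.mul ((continuous_const.mul
          (continuous_const.sub continuous_id)).pow m))).div_const _
      have hie : IntervalIntegrable e volume t b := by
        apply (hint.mono_set _).intervalIntegrable
        rw [Set.uIcc_of_le htb]
        exact Set.Icc_subset_Icc ht0 le_rfl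
      have hig : IntervalIntegrable g volume t b := (hgc1.add hgc2).intervalIntegrable t b
      have hmono : (∫ s in t..b, e s) ≤ ∫ s in t..b, g s := by
        apply intervalIntegral.integral_mono_on htb hie hig
        intro x hx
        exact ih x ⟨le_trans ht0 hx.1, hx.2⟩
      have hcomp : (∫ s in t..b, g s)
          = c * (∑ j ∈ Finset.range m, L ^ j / (j.factorial : ℝ) * ((b - t) ^ (j+1) / ((j:ℝ)+1)))
            + S * (L ^ m / (m.factorial : ℝ)) * ((b - t) ^ (m+1) / ((m:ℝ)+1)) := by
        rw [hg]
        rw [intervalIntegral.integral_add (hgc1.intervalIntegrable t b) (hgc2.intervalIntegrable t b),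
          intervalIntegral.integral_const_mul]
        congr 1
        · congr 1
          rw [intervalIntegral.integral_finset_sum]
          · apply Finset.sum_congr rfl
            intro j _
            have : (fun s => (L * (b - s)) ^ j / (j.factorial : ℝ))
                = fun s => (L ^ j / (j.factorial : ℝ)) * (b - s) ^ j := by
              funext s; rw [mul_pow]; ring
            rw [this, intervalIntegral.integral_const_mul, int_pow_aux]
          · intro j _
            exact (((continuous_const.mul (continuous_const.sub continuous_id)).pow j).div_const
              _).intervalIntegrable t b
        · have : (fun s => S * (L * (b - s)) ^ m / (m.factorial : ℝ))
              = fun s => (S * (L ^ m / (m.factorial : ℝ))) * (b - s) ^ m := by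
            funext s; rw [mul_pow]; ring
          rw [this, intervalIntegral.integral_const_mul, int_pow_aux]
      have step : e t ≤ c + L * ∫ s in t..b, g s := by
        have h0 := hineq t ⟨ht0, htb⟩
        nlinarith [hmono]
      rw [hcomp] at step
      refine le_trans step (le_of_eq ?_)
      rw [Finset.sum_range_succ' (fun j => (L * (b - t)) ^ j / (j.factorial : ℝ)) m]
      have hsum : ∑ j ∈ Finset.range m, (L * (b - t)) ^ (j + 1) / ((j+1).factorial : ℝ)
          = L * ∑ j ∈ Finset.range m, L ^ j / (j.factorial : ℝ) * ((b - t) ^ (j+1) / ((j:ℝ)+1)) := by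
        rw [Finset.mul_sum]
        exact Finset.sum_congr rfl (fun j _ => fact_term_aux L (b - t) j)
      rw [hsum, mul_div_assoc S, fact_term_aux L (b - t) m]
      simp only [pow_zero, Nat.factorial_zero, Nat.cast_one, div_one]
      ring
  intro t ht
  have htend : Tendsto (fun m : ℕ => c * Real.exp (L * b) + S * ((L * b) ^ m / (m.factorial : ℝ)))
      atTop (nhds (c * Real.exp (L * b))) := by
    have := (FloorSemiring.tendsto_pow_div_factorial_atTop (K := ℝ) (L * b)).const_mul S
    simpa using tendsto_const_nhds.add this
  refine ge_of_tendsto' htend (fun m => ?_)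
  have hbt : 0 ≤ b - t := by linarith [ht.2]
  have hLbt : L * (b - t) ≤ L * b := by nlinarith [ht.1]
  have h1 : (∑ j ∈ Finset.range m, (L * (b - t)) ^ j / (j.factorial : ℝ)) ≤ Real.exp (L * b) :=
    le_trans (Real.sum_le_exp_of_nonneg (by positivity) m) (Real.exp_le_exp.mpr hLbt)
  have h2 : (L * (b - t)) ^ m ≤ (L * b) ^ m := pow_le_pow_left₀ (by positivity) hLbt m
  have h3 : ((m.factorial : ℝ)) > 0 := by positivity
  calc e t ≤ c * (∑ j ∈ Finset.range m, (L * (b - t)) ^ j / (j.factorial : ℝ))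
        + S * (L * (b - t)) ^ m / (m.factorial : ℝ) := key m t ht
    _ ≤ c * Real.exp (L * b) + S * ((L * b) ^ m / (m.factorial : ℝ)) := by
        have := mul_le_mul_of_nonneg_left h1 hc
        have h4 : S * (L * (b - t)) ^ m / (m.factorial : ℝ)
            ≤ S * ((L * b) ^ m / (m.factorial : ℝ)) := by
          rw [mul_div_assoc]
          have h5 : (L * (b - t)) ^ m / (m.factorial : ℝ) ≤ (L * b) ^ m / (m.factorial : ℝ) :=
            div_le_div_of_nonneg_right h2 h3.le
          exact mul_le_mul_of_nonneg_left h5 hS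
        linarith
private lemma weak_limit_bound {b M : ℝ} (hb : 0 < b) (hM : 0 < M)
    (f : ℕ → ℝ → ℝ) (fl : ℝ → ℝ)
    (hfm : ∀ k, Measurable (f k)) (hflm : Measurable fl)
    (hbdd : ∀ k, ∀ᵐ t ∂((volume : Measure ℝ).restrict (Set.Icc 0 b)), |f k t| ≤ M)
    (hweak : ∀ φ : ℝ → ℝ, IntegrableOn φ (Set.Icc 0 b) volume →
      Tendsto (fun k => ∫ t in Set.Icc (0:ℝ) b, f k t * φ t) atTop
        (nhds (∫ t in Set.Icc (0:ℝ) b, fl t * φ t))) :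
    ∀ᵐ t ∂((volume : Measure ℝ).restrict (Set.Icc 0 b)), |fl t| ≤ M := by
  classical
  set g : ℝ → ℝ := fun t => if 0 ≤ fl t then 1 else -1 with hgdef
  have hgm : Measurable g := Measurable.ite (measurableSet_le measurable_const hflm)
    measurable_const measurable_const
  have hgabs : ∀ t, fl t * g t = |fl t| := by
    intro t
    by_cases h : 0 ≤ fl t
    · simp [hgdef, h, abs_of_nonneg h]
    · simp [hgdef, h, abs_of_neg (lt_of_not_ge h)]
  have hg1 : ∀ t, |g t| ≤ 1 := by
    intro t; by_cases h : 0 ≤ fl t <;> simp [hgdef, h]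
  -- the bad sets
  set S : ℕ → Set ℝ := fun m =>
    (Set.Icc 0 b ∩ {t | M + 1/(m+1) ≤ |fl t|}) ∩ {t | |fl t| ≤ m} with hSdef
  have hSmeas : ∀ m, MeasurableSet (S m) := by
    intro m
    exact (measurableSet_Icc.inter (measurableSet_le measurable_const hflm.abs)).inter
      (measurableSet_le hflm.abs measurable_const)
  have hSsub : ∀ m, S m ⊆ Set.Icc 0 b := fun m => fun t ht => ht.1.1
  have hSfin : ∀ m, volume (S m) < ⊤ := by
    intro m
    exact lt_of_le_of_lt (measure_mono (hSsub m)) (by rw [Real.volume_Icc]; exact ENNReal.ofReal_lt_top)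
  have hSnull : ∀ m, volume (S m) = 0 := by
    intro m
    set φ : ℝ → ℝ := (S m).indicator g with hφdef
    have hφint : IntegrableOn φ (Set.Icc 0 b) volume := by
      apply Integrable.mono' (integrable_const 1)
      · exact ((hgm.indicator (hSmeas m))).aestronglyMeasurable
      · refine Filter.Eventually.of_forall (fun t => ?_)
        by_cases h : t ∈ S m
        · simp [hφdef, Set.indicator_of_mem h, hg1 t]
        · simp [hφdef, Set.indicator_of_notMem h]
    -- each k integral bounded by M * vol S m
    have hSvol : ((volume.restrict (Set.Icc 0 b)) (S m)) = volume (S m) := by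
      rw [Measure.restrict_apply (hSmeas m)]
      congr 1
      exact Set.inter_eq_self_of_subset_left (hSsub m)
    have hik : ∀ k, ∫ t in Set.Icc (0:ℝ) b, f k t * φ t ≤ M * (volume (S m)).toReal := by
      intro k
      have heq : ∫ t in Set.Icc (0:ℝ) b, f k t * φ t = ∫ t in S m, f k t * g t := by
        have : (fun t => f k t * φ t) = (S m).indicator (fun t => f k t * g t) := by
          funext t
          rw [hφdef, ← Set.indicator_mul_right]
        rw [this, setIntegral_indicator (hSmeas m),
          Set.inter_eq_self_of_subset_right (hSsub m)]
      rw [heq]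
      have hb2 : ∀ᵐ t ∂(volume.restrict (S m)), ‖f k t * g t‖ ≤ M := by
        apply Filter.Eventually.mono (ae_restrict_of_ae_restrict_of_subset (hSsub m) (hbdd k))
        intro t ht
        rw [norm_mul, Real.norm_eq_abs, Real.norm_eq_abs]
        calc |f k t| * |g t| ≤ M * 1 := mul_le_mul ht (hg1 t) (abs_nonneg _) hM.le
        _ = M := mul_one M
      have := norm_setIntegral_le_of_norm_le_const_ae (hSfin m) hb2
      calc ∫ t in S m, f k t * g t ≤ |∫ t in S m, f k t * g t| := le_abs_self _
        _ ≤ M * (volume (S m)).toReal := by rw [← Real.norm_eq_abs]; exact this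
    -- the limit integral is ≥ (M + 1/(m+1)) vol S m
    have hfl_int : IntegrableOn (fun t => fl t * g t) (S m) volume := by
      apply Integrable.mono' (Iff.mpr integrableOn_const_iff (Or.inr (hSfin m)) : IntegrableOn (fun _ => (m:ℝ)) (S m) volume)
      · exact ((hflm.mul hgm)).aestronglyMeasurable
      · refine (ae_restrict_iff' (hSmeas m)).mpr (Filter.Eventually.of_forall (fun t ht => ?_))
        rw [Real.norm_eq_abs, hgabs t, abs_abs]
        exact ht.2
    have hlow : (M + 1/(m+1)) * (volume (S m)).toReal ≤ ∫ t in S m, fl t * g t := by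
      apply setIntegral_ge_of_const_le_real (hSmeas m) (hSfin m).ne
      · intro t ht
        rw [hgabs t]
        exact ht.1.2
      · exact hfl_int
    have heql : ∫ t in Set.Icc (0:ℝ) b, fl t * φ t = ∫ t in S m, fl t * g t := by
      have : (fun t => fl t * φ t) = (S m).indicator (fun t => fl t * g t) := by
        funext t
        rw [hφdef, ← Set.indicator_mul_right]
      rw [this, setIntegral_indicator (hSmeas m),
        Set.inter_eq_self_of_subset_right (hSsub m)]
    have hup : ∫ t in S m, fl t * g t ≤ M * (volume (S m)).toReal := by
      rw [← heql]
      exact le_of_tendsto (hweak φ hφint) (Filter.Eventually.of_forall hik)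
    have h0 : (volume (S m)).toReal ≤ 0 := by
      by_contra h
      push_neg at h
      have h1 : (1:ℝ)/(m+1) > 0 := by positivity
      nlinarith [le_trans hlow hup]
    have h2 : (volume (S m)).toReal = 0 := le_antisymm h0 ENNReal.toReal_nonneg
    exact (ENNReal.toReal_eq_zero_iff _).mp h2 |>.resolve_right (hSfin m).ne
  -- combine
  rw [ae_restrict_iff' measurableSet_Icc, ae_iff]
  have hsub : {t : ℝ | ¬ (t ∈ Set.Icc 0 b → |fl t| ≤ M)} ⊆ ⋃ m, S m := by
    intro t ht
    simp only [Set.mem_setOf_eq, Classical.not_imp] at ht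
    obtain ⟨htI, htM⟩ := ht
    push_neg at htM
    have hd : 0 < |fl t| - M := by linarith
    obtain ⟨m1, hm1⟩ := exists_nat_ge (|fl t|)
    obtain ⟨m2, hm2⟩ := exists_nat_ge (1/(|fl t| - M))
    refine Set.mem_iUnion.mpr ⟨max m1 m2, ⟨⟨htI, ?_⟩, ?_⟩⟩
    · have hle : 1/(|fl t| - M) ≤ (max m1 m2 : ℕ) + 1 := by
        calc (1:ℝ)/(|fl t| - M) ≤ m2 := hm2
        _ ≤ (max m1 m2 : ℕ) := by exact_mod_cast Nat.cast_le.mpr (le_max_right m1 m2)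
        _ ≤ (max m1 m2 : ℕ) + 1 := by linarith
      have : (1:ℝ)/((max m1 m2 : ℕ) + 1) ≤ |fl t| - M := by
        rw [div_le_iff₀ (by positivity)]
        rw [div_le_iff₀ hd] at hle
        nlinarith
      simp only [Set.mem_setOf_eq]
      linarith
    · simp only [Set.mem_setOf_eq]
      calc |fl t| ≤ m1 := hm1
      _ ≤ ((max m1 m2 : ℕ) : ℝ) := by exact_mod_cast Nat.cast_le.mpr (le_max_left m1 m2)
  exact measure_mono_null hsub (measure_iUnion_null (fun m => hSnull m))
private lemma aemeasurable_pi' {ι : Type*} [Countable ι] {f : ℝ → ι → ℝ} {μ : Measure ℝ}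
    (h : ∀ i, AEMeasurable (fun x => f x i) μ) : AEMeasurable f μ := by
  choose g hg hfg using h
  refine ⟨fun x i => g i x, measurable_pi_lambda _ hg, ?_⟩
  filter_upwards [ae_all_iff.mpr hfg] with x hx
  funext i
  exact hx i

private lemma mulVec_norm_bound {n : ℕ} (C : Matrix (Fin n) (Fin n) ℝ) (v : Fin n → ℝ) (c0 : ℝ)
    (hc0 : 0 ≤ c0) (hC : ∀ i j, |C i j| ≤ c0) : ‖C.mulVec v‖ ≤ n * c0 * ‖v‖ := by
  rw [pi_norm_le_iff_of_nonneg (by positivity)]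
  intro i
  calc ‖C.mulVec v i‖ = ‖∑ j, C i j * v j‖ := by
        simp [Matrix.mulVec, dotProduct]
  _ ≤ ∑ j, ‖C i j * v j‖ := norm_sum_le _ _
  _ ≤ ∑ _j : Fin n, c0 * ‖v‖ := by
      refine Finset.sum_le_sum (fun j _ => ?_)
      rw [norm_mul]
      exact mul_le_mul (by rw [Real.norm_eq_abs]; exact hC i j) (norm_le_pi_norm v j)
        (norm_nonneg _) hc0
  _ = n * c0 * ‖v‖ := by simp [Finset.sum_const, Finset.card_univ]; ring

private lemma integrableOn_matrix_mulVec {n : ℕ} {b c0 : ℝ}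
    (C : ℝ → Matrix (Fin n) (Fin n) ℝ) (v : ℝ → Fin n → ℝ)
    (hCm : ∀ i j, AEMeasurable (fun t => C t i j) ((volume : Measure ℝ).restrict (Set.Icc 0 b)))
    (hCb : ∀ i j, ∀ᵐ t ∂((volume : Measure ℝ).restrict (Set.Icc 0 b)), |C t i j| ≤ c0)
    (hv : ContinuousOn v (Set.Icc 0 b)) :
    IntegrableOn (fun s => (C s).mulVec (v s)) (Set.Icc 0 b) volume := by
  obtain ⟨V, hV⟩ := isCompact_Icc.exists_bound_of_continuousOn hv
  set c1 := max c0 0 with hc1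
  set V1 := max V 0 with hV1
  have hmeas : AEMeasurable (fun s => (C s).mulVec (v s))
      ((volume : Measure ℝ).restrict (Set.Icc 0 b)) := by
    apply aemeasurable_pi'
    intro i
    have : (fun x => (C x).mulVec (v x) i) = fun x => ∑ j, C x i j * v x j := by
      funext x; simp [Matrix.mulVec, dotProduct]
    rw [this]
    exact Finset.aemeasurable_fun_sum _ (fun j _ => (hCm i j).mul
      (((continuous_apply j).comp_continuousOn hv).aemeasurable measurableSet_Icc))
  apply Integrable.mono'
    (Iff.mpr integrableOn_const_iff (Or.inr (by rw [Real.volume_Icc]; exact ENNReal.ofReal_lt_top))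
      : IntegrableOn (fun _ => (n : ℝ) * c1 * V1) (Set.Icc 0 b) volume)
  · exact hmeas.aestronglyMeasurable
  · have hmem := ae_restrict_mem (μ := (volume : Measure ℝ)) (measurableSet_Icc (a := (0:ℝ)) (b := b))
    have hall : ∀ᵐ t ∂((volume : Measure ℝ).restrict (Set.Icc 0 b)), ∀ i j, |C t i j| ≤ c0 :=
      ae_all_iff.mpr (fun i => ae_all_iff.mpr (fun j => hCb i j))
    filter_upwards [hmem, hall] with t htI htC
    calc ‖(C t).mulVec (v t)‖ ≤ n * c1 * ‖v t‖ :=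
          mulVec_norm_bound _ _ _ (le_max_right _ _)
            (fun i j => le_trans (htC i j) (le_max_left _ _))
    _ ≤ n * c1 * V1 := by
        refine mul_le_mul_of_nonneg_left (le_trans (hV t htI) (le_max_left _ _)) ?_
        positivity

private lemma integrableOn_scalar_mul {b c0 : ℝ} (C v : ℝ → ℝ)
    (hCm : AEMeasurable C ((volume : Measure ℝ).restrict (Set.Icc 0 b)))
    (hCb : ∀ᵐ t ∂((volume : Measure ℝ).restrict (Set.Icc 0 b)), |C t| ≤ c0)
    (hv : ContinuousOn v (Set.Icc 0 b)) :
    IntegrableOn (fun s => C s * v s) (Set.Icc 0 b) volume := by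
  obtain ⟨V, hV⟩ := isCompact_Icc.exists_bound_of_continuousOn hv
  set c1 := max c0 0 with hc1
  set V1 := max V 0 with hV1
  apply Integrable.mono'
    (Iff.mpr integrableOn_const_iff (Or.inr (by rw [Real.volume_Icc]; exact ENNReal.ofReal_lt_top))
      : IntegrableOn (fun _ => c1 * V1) (Set.Icc 0 b) volume)
  · exact (hCm.mul (hv.aemeasurable measurableSet_Icc)).aestronglyMeasurable
  · have hmem := ae_restrict_mem (μ := (volume : Measure ℝ)) (measurableSet_Icc (a := (0:ℝ)) (b := b))
    filter_upwards [hmem, hCb] with t htI htC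
    rw [norm_mul, Real.norm_eq_abs, Real.norm_eq_abs]
    have h1 : |C t| ≤ c1 := le_trans htC (le_max_left _ _)
    have h2 : |v t| ≤ V1 := le_trans (by simpa [Real.norm_eq_abs] using hV t htI) (le_max_left _ _)
    exact mul_le_mul h1 h2 (abs_nonneg _) (le_max_right _ _)

theorem stmt_12 (n : ℕ) (b : ℝ) (hb : 0 < b) (M : ℝ) (hM : 0 < M)
    (A B : ℕ → ℝ → Matrix (Fin n) (Fin n) ℝ) (Al Bl : ℝ → Matrix (Fin n) (Fin n) ℝ)
    (hAmeas : ∀ k (i j : Fin n), Measurable (fun t => A k t i j))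
    (hBmeas : ∀ k (i j : Fin n), Measurable (fun t => B k t i j))
    (hAlmeas : ∀ i j : Fin n, Measurable (fun t => Al t i j))
    (hBlmeas : ∀ i j : Fin n, Measurable (fun t => Bl t i j))
    (hAbdd : ∀ k (i j : Fin n),
      ∀ᵐ t ∂((volume : Measure ℝ).restrict (Set.Icc 0 b)), |A k t i j| ≤ M)
    (hBbdd : ∀ k (i j : Fin n),
      ∀ᵐ t ∂((volume : Measure ℝ).restrict (Set.Icc 0 b)), |B k t i j| ≤ M)
    (hAweak : ∀ (i j : Fin n) (φ : ℝ → ℝ), IntegrableOn φ (Set.Icc 0 b) volume →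
      Tendsto (fun k => ∫ t in Set.Icc (0:ℝ) b, A k t i j * φ t) atTop
        (nhds (∫ t in Set.Icc (0:ℝ) b, Al t i j * φ t)))
    (hBweak : ∀ (i j : Fin n) (φ : ℝ → ℝ), IntegrableOn φ (Set.Icc 0 b) volume →
      Tendsto (fun k => ∫ t in Set.Icc (0:ℝ) b, B k t i j * φ t) atTop
        (nhds (∫ t in Set.Icc (0:ℝ) b, Bl t i j * φ t)))
    (ψ : ℕ → Fin n → ℝ) (ψl : Fin n → ℝ) (hψ : Tendsto ψ atTop (nhds ψl))
    (p : ℕ → ℝ → Fin n → ℝ) (pl : ℝ → Fin n → ℝ)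
    (hpk : ∀ k, ContinuousOn (p k) (Set.Icc 0 b) ∧ ∀ t ∈ Set.Icc (0:ℝ) b,
      p k t = ψ k + ∫ s in t..b, ((Matrix.transpose (A k s)).mulVec (p k s) + (Matrix.transpose (B k s)).mulVec (p k s)))
    (hpl : ContinuousOn pl (Set.Icc 0 b) ∧ ∀ t ∈ Set.Icc (0:ℝ) b,
      pl t = ψl + ∫ s in t..b, ((Matrix.transpose (Al s)).mulVec (pl s) + (Matrix.transpose (Bl s)).mulVec (pl s))) :
    TendstoUniformlyOn p pl atTop (Set.Icc 0 b) := by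
  classical
  obtain ⟨hplc, hpleq⟩ := hpl
  -- a.e. bounds on the weak-star limits
  have hAlb : ∀ i j : Fin n,
      ∀ᵐ t ∂((volume : Measure ℝ).restrict (Set.Icc 0 b)), |Al t i j| ≤ M := fun i j =>
    weak_limit_bound hb hM (fun k t => A k t i j) (fun t => Al t i j)
      (fun k => hAmeas k i j) (hAlmeas i j) (fun k => hAbdd k i j) (hAweak i j)
  have hBlb : ∀ i j : Fin n,
      ∀ᵐ t ∂((volume : Measure ℝ).restrict (Set.Icc 0 b)), |Bl t i j| ≤ M := fun i j =>
    weak_limit_bound hb hM (fun k t => B k t i j) (fun t => Bl t i j)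
      (fun k => hBmeas k i j) (hBlmeas i j) (fun k => hBbdd k i j) (hBweak i j)
  -- the combined coefficient matrices
  set C1 : ℕ → ℝ → Matrix (Fin n) (Fin n) ℝ := fun k s => (A k s + B k s).transpose with hC1
  set C2 : ℝ → Matrix (Fin n) (Fin n) ℝ := fun s => (Al s + Bl s).transpose with hC2
  set C3 : ℕ → ℝ → Matrix (Fin n) (Fin n) ℝ :=
    fun k s => ((A k s - Al s) + (B k s - Bl s)).transpose with hC3
  set q : ℕ → ℝ → Fin n → ℝ := fun k t => p k t - pl t with hqdef
  have hqc : ∀ k, ContinuousOn (q k) (Set.Icc 0 b) := fun k => (hpk k).1.sub hplc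
  -- entry measurability and bounds
  have hC1m : ∀ k (i j : Fin n),
      AEMeasurable (fun t => C1 k t i j) ((volume : Measure ℝ).restrict (Set.Icc 0 b)) := by
    intro k i j
    exact ((hAmeas k j i).add (hBmeas k j i)).aemeasurable
  have hC2m : ∀ (i j : Fin n),
      AEMeasurable (fun t => C2 t i j) ((volume : Measure ℝ).restrict (Set.Icc 0 b)) := by
    intro i j
    exact ((hAlmeas j i).add (hBlmeas j i)).aemeasurable
  have hC3m : ∀ k (i j : Fin n),
      AEMeasurable (fun t => C3 k t i j) ((volume : Measure ℝ).restrict (Set.Icc 0 b)) := by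
    intro k i j
    exact (((hAmeas k j i).sub (hAlmeas j i)).add ((hBmeas k j i).sub (hBlmeas j i))).aemeasurable
  have hC1b : ∀ k (i j : Fin n),
      ∀ᵐ t ∂((volume : Measure ℝ).restrict (Set.Icc 0 b)), |C1 k t i j| ≤ 2*M := by
    intro k i j
    filter_upwards [hAbdd k j i, hBbdd k j i] with t h1 h2
    have he : C1 k t i j = A k t j i + B k t j i := rfl
    rw [he]
    calc |A k t j i + B k t j i| ≤ |A k t j i| + |B k t j i| := abs_add_le _ _
    _ ≤ 2*M := by linarith
  have hC2b : ∀ (i j : Fin n),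
      ∀ᵐ t ∂((volume : Measure ℝ).restrict (Set.Icc 0 b)), |C2 t i j| ≤ 2*M := by
    intro i j
    filter_upwards [hAlb j i, hBlb j i] with t h1 h2
    have he : C2 t i j = Al t j i + Bl t j i := rfl
    rw [he]
    calc |Al t j i + Bl t j i| ≤ |Al t j i| + |Bl t j i| := abs_add_le _ _
    _ ≤ 2*M := by linarith
  have hC3b : ∀ k (i j : Fin n),
      ∀ᵐ t ∂((volume : Measure ℝ).restrict (Set.Icc 0 b)), |C3 k t i j| ≤ 4*M := by
    intro k i j
    filter_upwards [hAbdd k j i, hBbdd k j i, hAlb j i, hBlb j i] with t h1 h2 h3 h4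
    have he : C3 k t i j = (A k t j i - Al t j i) + (B k t j i - Bl t j i) := rfl
    rw [he]
    calc |(A k t j i - Al t j i) + (B k t j i - Bl t j i)|
        ≤ |A k t j i - Al t j i| + |B k t j i - Bl t j i| := abs_add_le _ _
    _ ≤ (|A k t j i| + |Al t j i|) + (|B k t j i| + |Bl t j i|) := by
        gcongr <;> exact abs_sub _ _
    _ ≤ 4*M := by linarith
  -- integrability on [0, b]
  have hInt0 : ∀ k, IntegrableOn (fun s => (C1 k s).mulVec (p k s)) (Set.Icc 0 b) volume :=
    fun k => integrableOn_matrix_mulVec _ _ (hC1m k) (hC1b k) (hpk k).1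
  have hInt1 : ∀ k, IntegrableOn (fun s => (C1 k s).mulVec (q k s)) (Set.Icc 0 b) volume :=
    fun k => integrableOn_matrix_mulVec _ _ (hC1m k) (hC1b k) (hqc k)
  have hInt2 : ∀ k, IntegrableOn (fun s => (C1 k s).mulVec (pl s)) (Set.Icc 0 b) volume :=
    fun k => integrableOn_matrix_mulVec _ _ (hC1m k) (hC1b k) hplc
  have hInt3 : IntegrableOn (fun s => (C2 s).mulVec (pl s)) (Set.Icc 0 b) volume :=
    integrableOn_matrix_mulVec _ _ hC2m hC2b hplc
  have hInt4 : ∀ k, IntegrableOn (fun s => (C3 k s).mulVec (pl s)) (Set.Icc 0 b) volume :=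
    fun k => integrableOn_matrix_mulVec _ _ (hC3m k) (hC3b k) hplc
  -- interval integrability helpers
  have hIIv : ∀ (f : ℝ → Fin n → ℝ), IntegrableOn f (Set.Icc 0 b) volume →
      ∀ t ∈ Set.Icc (0:ℝ) b, IntervalIntegrable f volume t b := by
    intro f hf t ht
    apply (hf.mono_set _).intervalIntegrable
    rw [Set.uIcc_of_le ht.2]
    exact Set.Icc_subset_Icc ht.1 le_rfl
  have hIIs : ∀ (f : ℝ → ℝ), IntegrableOn f (Set.Icc 0 b) volume →
      ∀ t ∈ Set.Icc (0:ℝ) b, IntervalIntegrable f volume t b := by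
    intro f hf t ht
    apply (hf.mono_set _).intervalIntegrable
    rw [Set.uIcc_of_le ht.2]
    exact Set.Icc_subset_Icc ht.1 le_rfl
  -- the remainder term
  set r : ℕ → ℝ → Fin n → ℝ := fun k t => ∫ s in t..b, (C3 k s).mulVec (pl s) with hrdef
  have hC3eq : ∀ k s, C3 k s = C1 k s - C2 s := by
    intro k s
    simp only [hC1, hC2, hC3, Matrix.transpose_add, Matrix.transpose_sub]
    abel
  -- the integral equation for q
  have heq : ∀ k, ∀ t ∈ Set.Icc (0:ℝ) b,
      q k t = (ψ k - ψl) + (∫ s in t..b, (C1 k s).mulVec (q k s)) + r k t := by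
    intro k t ht
    have h1 := (hpk k).2 t ht
    have h2 := hpleq t ht
    have e0 : (fun s => (Matrix.transpose (A k s)).mulVec (p k s)
        + (Matrix.transpose (B k s)).mulVec (p k s)) = fun s => (C1 k s).mulVec (p k s) := by
      funext s
      simp only [hC1, Matrix.transpose_add, Matrix.add_mulVec]
    have e0l : (fun s => (Matrix.transpose (Al s)).mulVec (pl s)
        + (Matrix.transpose (Bl s)).mulVec (pl s)) = fun s => (C2 s).mulVec (pl s) := by
      funext s
      simp only [hC2, Matrix.transpose_add, Matrix.add_mulVec]
    rw [e0] at h1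
    rw [e0l] at h2
    have e1 : (∫ s in t..b, (C1 k s).mulVec (p k s))
        = (∫ s in t..b, (C1 k s).mulVec (q k s)) + ∫ s in t..b, (C1 k s).mulVec (pl s) := by
      rw [← intervalIntegral.integral_add (hIIv _ (hInt1 k) t ht) (hIIv _ (hInt2 k) t ht)]
      apply intervalIntegral.integral_congr
      intro s _
      simp only [hqdef]
      rw [← Matrix.mulVec_add, sub_add_cancel]
    have e2 : r k t = (∫ s in t..b, (C1 k s).mulVec (pl s)) - ∫ s in t..b, (C2 s).mulVec (pl s) := by
      simp only [hrdef]
      rw [← intervalIntegral.integral_sub (hIIv _ (hInt2 k) t ht) (hIIv _ hInt3 t ht)]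
      apply intervalIntegral.integral_congr
      intro s _
      simp only [hC3eq k s, Matrix.sub_mulVec]
    simp only [hqdef]
    rw [h1, h2, e1, e2]
    abel

  -- constants
  set Lc : ℝ := (n:ℝ) * (2*M) with hLcdef
  have hLc0 : 0 ≤ Lc := by positivity
  obtain ⟨P0, hP0⟩ := isCompact_Icc.exists_bound_of_continuousOn hplc
  set P : ℝ := max P0 0 with hPdef
  have hP : ∀ t ∈ Set.Icc (0:ℝ) b, ‖pl t‖ ≤ P := fun t ht => le_trans (hP0 t ht) (le_max_left _ _)
  have hP0' : 0 ≤ P := le_max_right _ _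
  set Lip : ℝ := (n:ℝ) * (4*M) * P with hLipdef
  have hLip0 : 0 ≤ Lip := by positivity
  -- a.e. norm bounds
  have hC1norm : ∀ k, ∀ᵐ s ∂((volume : Measure ℝ).restrict (Set.Icc 0 b)),
      ‖(C1 k s).mulVec (q k s)‖ ≤ Lc * ‖q k s‖ := by
    intro k
    filter_upwards [ae_all_iff.mpr (fun i : Fin n => ae_all_iff.mpr (fun j : Fin n => hC1b k i j))]
      with s hs
    have := mulVec_norm_bound (C1 k s) (q k s) (2*M) (by positivity) hs
    calc ‖(C1 k s).mulVec (q k s)‖ ≤ (n:ℝ) * (2*M) * ‖q k s‖ := this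
    _ = Lc * ‖q k s‖ := by rw [hLcdef]
  have hC3norm : ∀ k, ∀ᵐ s ∂((volume : Measure ℝ).restrict (Set.Icc 0 b)),
      ‖(C3 k s).mulVec (pl s)‖ ≤ Lip := by
    intro k
    filter_upwards [ae_restrict_mem (μ := (volume : Measure ℝ)) (measurableSet_Icc (a := (0:ℝ)) (b := b)),
      ae_all_iff.mpr (fun i : Fin n => ae_all_iff.mpr (fun j : Fin n => hC3b k i j))]
      with s hsI hs
    calc ‖(C3 k s).mulVec (pl s)‖ ≤ (n:ℝ) * (4*M) * ‖pl s‖ :=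
          mulVec_norm_bound (C3 k s) (pl s) (4*M) (by positivity) hs
    _ ≤ (n:ℝ) * (4*M) * P := by
        exact mul_le_mul_of_nonneg_left (hP s hsI) (by positivity)
    _ = Lip := by rw [hLipdef]
  -- the basic norm inequality
  have hnormineq : ∀ k, ∀ t ∈ Set.Icc (0:ℝ) b,
      ‖q k t‖ ≤ ‖ψ k - ψl‖ + ‖r k t‖ + Lc * ∫ s in t..b, ‖q k s‖ := by
    intro k t ht
    have h := heq k t ht
    have hb1 : ‖∫ s in t..b, (C1 k s).mulVec (q k s)‖ ≤ Lc * ∫ s in t..b, ‖q k s‖ := by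
      have h1 : ‖∫ s in t..b, (C1 k s).mulVec (q k s)‖
          ≤ ∫ s in t..b, ‖(C1 k s).mulVec (q k s)‖ :=
        intervalIntegral.norm_integral_le_integral_norm ht.2
      have h2 : (∫ s in t..b, ‖(C1 k s).mulVec (q k s)‖)
          ≤ ∫ s in t..b, Lc * ‖q k s‖ := by
        apply intervalIntegral.integral_mono_ae_restrict ht.2
        · exact hIIs _ (hInt1 k).norm t ht
        · exact hIIs _ ((continuousOn_const.mul (hqc k).norm).integrableOn_Icc) t ht
        · exact ae_restrict_of_ae_restrict_of_subset (Set.Icc_subset_Icc ht.1 le_rfl) (hC1norm k)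
      have h3 : (∫ s in t..b, Lc * ‖q k s‖) = Lc * ∫ s in t..b, ‖q k s‖ :=
        intervalIntegral.integral_const_mul _ _
      linarith
    calc ‖q k t‖ = ‖(ψ k - ψl) + (∫ s in t..b, (C1 k s).mulVec (q k s)) + r k t‖ := by rw [h]
    _ ≤ ‖ψ k - ψl‖ + ‖∫ s in t..b, (C1 k s).mulVec (q k s)‖ + ‖r k t‖ := norm_add₃_le
    _ ≤ ‖ψ k - ψl‖ + ‖r k t‖ + Lc * ∫ s in t..b, ‖q k s‖ := by linarith
  -- Lipschitz estimate for r
  have hrlip : ∀ k, ∀ t ∈ Set.Icc (0:ℝ) b, ∀ t' ∈ Set.Icc (0:ℝ) b, t' ≤ t →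
      ‖r k t - r k t'‖ ≤ Lip * (t - t') := by
    intro k t ht t' ht' htt
    have hi1 : IntervalIntegrable (fun s => (C3 k s).mulVec (pl s)) volume t' t := by
      apply ((hInt4 k).mono_set _).intervalIntegrable
      rw [Set.uIcc_of_le htt]
      exact Set.Icc_subset_Icc ht'.1 ht.2
    have hi2 : IntervalIntegrable (fun s => (C3 k s).mulVec (pl s)) volume t b :=
      hIIv _ (hInt4 k) t ht
    have hadd := intervalIntegral.integral_add_adjacent_intervals hi1 hi2
    have hdiff : r k t - r k t' = -(∫ s in t'..t, (C3 k s).mulVec (pl s)) := by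
      simp only [hrdef]
      rw [← hadd]
      abel
    rw [hdiff, norm_neg]
    have h1 : ‖∫ s in t'..t, (C3 k s).mulVec (pl s)‖
        ≤ ∫ s in t'..t, ‖(C3 k s).mulVec (pl s)‖ :=
      intervalIntegral.norm_integral_le_integral_norm htt
    have h2 : (∫ s in t'..t, ‖(C3 k s).mulVec (pl s)‖) ≤ ∫ s in t'..t, Lip := by
      apply intervalIntegral.integral_mono_ae_restrict htt
      · exact hi1.norm
      · exact intervalIntegrable_const
      · exact ae_restrict_of_ae_restrict_of_subset (Set.Icc_subset_Icc ht'.1 ht.2) (hC3norm k)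
    have h3 : (∫ _s in t'..t, Lip) = Lip * (t - t') := by
      rw [intervalIntegral.integral_const, smul_eq_mul]
      ring
    linarith

  -- pointwise convergence of r
  have hrc : ∀ j : Fin n, ContinuousOn (fun s => pl s j) (Set.Icc 0 b) :=
    fun j => (continuous_apply j).comp_continuousOn hplc
  have hplj_int : ∀ j : Fin n, IntegrableOn (fun s => pl s j) (Set.Icc 0 b) volume :=
    fun j => (hrc j).integrableOn_Icc
  have hscalar : ∀ (Cf : ℝ → ℝ) (j : Fin n), ∀ t ∈ Set.Icc (0:ℝ) b,
      (∫ s in Set.Icc (0:ℝ) b, Cf s * (Set.Icc t b).indicator (fun s' => pl s' j) s)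
        = ∫ s in t..b, Cf s * pl s j := by
    intro Cf j t ht
    have he : (fun s => Cf s * (Set.Icc t b).indicator (fun s' => pl s' j) s)
        = (Set.Icc t b).indicator (fun s => Cf s * pl s j) := by
      funext s
      exact (Set.indicator_mul_right _ _ _).symm
    rw [he, setIntegral_indicator measurableSet_Icc,
      Set.inter_eq_self_of_subset_right (Set.Icc_subset_Icc ht.1 le_rfl),
      integral_Icc_eq_integral_Ioc, ← intervalIntegral.integral_of_le ht.2]
  have hAtend : ∀ (i j : Fin n), ∀ t ∈ Set.Icc (0:ℝ) b,
      Tendsto (fun k => ∫ s in t..b, A k s j i * pl s j) atTop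
        (nhds (∫ s in t..b, Al s j i * pl s j)) := by
    intro i j t ht
    have hφ : IntegrableOn ((Set.Icc t b).indicator (fun s' => pl s' j)) (Set.Icc 0 b) volume :=
      (hplj_int j).indicator measurableSet_Icc
    have h := hAweak j i _ hφ
    have e1 : (fun k => ∫ s in Set.Icc (0:ℝ) b,
        A k s j i * (Set.Icc t b).indicator (fun s' => pl s' j) s)
        = fun k => ∫ s in t..b, A k s j i * pl s j :=
      funext (fun k => hscalar (fun s => A k s j i) j t ht)
    have e2 : (∫ s in Set.Icc (0:ℝ) b,
        Al s j i * (Set.Icc t b).indicator (fun s' => pl s' j) s)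
        = ∫ s in t..b, Al s j i * pl s j := hscalar (fun s => Al s j i) j t ht
    rwa [e1, e2] at h
  have hBtend : ∀ (i j : Fin n), ∀ t ∈ Set.Icc (0:ℝ) b,
      Tendsto (fun k => ∫ s in t..b, B k s j i * pl s j) atTop
        (nhds (∫ s in t..b, Bl s j i * pl s j)) := by
    intro i j t ht
    have hφ : IntegrableOn ((Set.Icc t b).indicator (fun s' => pl s' j)) (Set.Icc 0 b) volume :=
      (hplj_int j).indicator measurableSet_Icc
    have h := hBweak j i _ hφ
    have e1 : (fun k => ∫ s in Set.Icc (0:ℝ) b,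
        B k s j i * (Set.Icc t b).indicator (fun s' => pl s' j) s)
        = fun k => ∫ s in t..b, B k s j i * pl s j :=
      funext (fun k => hscalar (fun s => B k s j i) j t ht)
    have e2 : (∫ s in Set.Icc (0:ℝ) b,
        Bl s j i * (Set.Icc t b).indicator (fun s' => pl s' j) s)
        = ∫ s in t..b, Bl s j i * pl s j := hscalar (fun s => Bl s j i) j t ht
    rwa [e1, e2] at h
  -- componentwise formula for r
  have hrcomp : ∀ k, ∀ t ∈ Set.Icc (0:ℝ) b, ∀ i : Fin n,
      r k t i = ∑ j : Fin n, ((∫ s in t..b, A k s j i * pl s j) - (∫ s in t..b, Al s j i * pl s j)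
        + ((∫ s in t..b, B k s j i * pl s j) - (∫ s in t..b, Bl s j i * pl s j))) := by
    intro k t ht i
    have hproj := (ContinuousLinearMap.proj (R := ℝ) (φ := fun _ : Fin n => ℝ) i
      ).intervalIntegral_comp_comm (hIIv _ (hInt4 k) t ht)
    simp only [ContinuousLinearMap.proj_apply] at hproj
    have hstep1 : r k t i = ∫ s in t..b, ((C3 k s).mulVec (pl s)) i := by
      simp only [hrdef]
      exact hproj.symm
    have hpieceA : ∀ j : Fin n, IntervalIntegrable (fun s => A k s j i * pl s j) volume t b :=
      fun j => hIIs _ (integrableOn_scalar_mul _ _ (hAmeas k j i).aemeasurable (hAbdd k j i)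
        (hrc j)) t ht
    have hpieceAl : ∀ j : Fin n, IntervalIntegrable (fun s => Al s j i * pl s j) volume t b :=
      fun j => hIIs _ (integrableOn_scalar_mul _ _ (hAlmeas j i).aemeasurable (hAlb j i)
        (hrc j)) t ht
    have hpieceB : ∀ j : Fin n, IntervalIntegrable (fun s => B k s j i * pl s j) volume t b :=
      fun j => hIIs _ (integrableOn_scalar_mul _ _ (hBmeas k j i).aemeasurable (hBbdd k j i)
        (hrc j)) t ht
    have hpieceBl : ∀ j : Fin n, IntervalIntegrable (fun s => Bl s j i * pl s j) volume t b :=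
      fun j => hIIs _ (integrableOn_scalar_mul _ _ (hBlmeas j i).aemeasurable (hBlb j i)
        (hrc j)) t ht
    have hcompint : (fun s => ((C3 k s).mulVec (pl s)) i)
        = fun s => ∑ j : Fin n, (A k s j i - Al s j i + (B k s j i - Bl s j i)) * pl s j := by
      funext s
      simp [hC3, Matrix.mulVec, dotProduct, Matrix.transpose_apply, Matrix.sub_apply,
        Matrix.add_apply]
    have hsummand : ∀ j : Fin n,
        IntervalIntegrable (fun s => (A k s j i - Al s j i + (B k s j i - Bl s j i)) * pl s j)
          volume t b := by
      intro j
      have he : (fun s => (A k s j i - Al s j i + (B k s j i - Bl s j i)) * pl s j)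
          = fun s => A k s j i * pl s j - Al s j i * pl s j
            + (B k s j i * pl s j - Bl s j i * pl s j) := by
        funext s; ring
      rw [he]
      exact ((hpieceA j).sub (hpieceAl j)).add ((hpieceB j).sub (hpieceBl j))
    have hsplit : ∀ j : Fin n,
        (∫ s in t..b, (A k s j i - Al s j i + (B k s j i - Bl s j i)) * pl s j)
          = (∫ s in t..b, A k s j i * pl s j) - (∫ s in t..b, Al s j i * pl s j)
            + ((∫ s in t..b, B k s j i * pl s j) - (∫ s in t..b, Bl s j i * pl s j)) := by
      intro j
      rw [← intervalIntegral.integral_sub (hpieceA j) (hpieceAl j),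
        ← intervalIntegral.integral_sub (hpieceB j) (hpieceBl j),
        ← intervalIntegral.integral_add ((hpieceA j).sub (hpieceAl j))
          ((hpieceB j).sub (hpieceBl j))]
      apply intervalIntegral.integral_congr
      intro s _
      ring
    rw [hstep1, hcompint, intervalIntegral.integral_finset_sum (fun j _ => hsummand j)]
    exact Finset.sum_congr rfl (fun j _ => hsplit j)
  have hrtend : ∀ t ∈ Set.Icc (0:ℝ) b, Tendsto (fun k => r k t) atTop (nhds 0) := by
    intro t ht
    rw [tendsto_pi_nhds]
    intro i
    have h0 : Tendsto (fun k => ∑ j : Fin n,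
        ((∫ s in t..b, A k s j i * pl s j) - (∫ s in t..b, Al s j i * pl s j)
          + ((∫ s in t..b, B k s j i * pl s j) - (∫ s in t..b, Bl s j i * pl s j))))
        atTop (nhds (∑ _j : Fin n, (0:ℝ))) := by
      apply tendsto_finset_sum
      intro j _
      have hA := hAtend i j t ht
      have hB := hBtend i j t ht
      have := (hA.sub (tendsto_const_nhds (x := ∫ s in t..b, Al s j i * pl s j))).add
        (hB.sub (tendsto_const_nhds (x := ∫ s in t..b, Bl s j i * pl s j)))
      simpa using this
    simp only [Finset.sum_const, smul_eq_mul, mul_zero] at h0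
    have := h0.congr (fun k => (hrcomp k t ht i).symm)
    simpa using this

  -- uniform convergence of r
  have hrunif : ∀ ε > (0:ℝ), ∀ᶠ k in atTop, ∀ t ∈ Set.Icc (0:ℝ) b, ‖r k t‖ < ε := by
    intro ε hε
    set δ : ℝ := ε / (2*(Lip+1)) with hδdef
    have hδ : 0 < δ := by positivity
    obtain ⟨F, hFI, hFcov⟩ := isCompact_Icc.elim_nhds_subcover
      (fun t : ℝ => Metric.ball t δ) (fun t _ => Metric.ball_mem_nhds t hδ)
    have hev : ∀ᶠ k in atTop, ∀ t0 ∈ F, ‖r k t0‖ < ε/2 := by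
      rw [Filter.eventually_all_finset]
      intro t0 ht0
      have htend := hrtend t0 (hFI t0 ht0)
      exact (NormedAddCommGroup.tendsto_nhds_zero.mp htend) (ε/2) (by positivity)
    refine hev.mono (fun k hk t ht => ?_)
    obtain ⟨t0, ht0F, ht0b⟩ := Set.mem_iUnion₂.mp (hFcov ht)
    have ht0I : t0 ∈ Set.Icc (0:ℝ) b := hFI t0 ht0F
    have hd : |t - t0| < δ := by
      rw [← Real.dist_eq]
      exact Metric.mem_ball.mp ht0b
    have hlip2 : ‖r k t - r k t0‖ ≤ Lip * |t - t0| := by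
      rcases le_total t0 t with hle | hle
      · calc ‖r k t - r k t0‖ ≤ Lip * (t - t0) := hrlip k t ht t0 ht0I hle
        _ = Lip * |t - t0| := by rw [abs_of_nonneg (by linarith)]
      · calc ‖r k t - r k t0‖ = ‖r k t0 - r k t‖ := norm_sub_rev _ _
        _ ≤ Lip * (t0 - t) := hrlip k t0 ht0I t ht hle
        _ = Lip * |t - t0| := by rw [abs_sub_comm, abs_of_nonneg (by linarith)]
    have h1 : ‖r k t‖ ≤ ‖r k t0‖ + ‖r k t - r k t0‖ := by
      calc ‖r k t‖ = ‖r k t0 + (r k t - r k t0)‖ := by congr 1; abel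
      _ ≤ ‖r k t0‖ + ‖r k t - r k t0‖ := norm_add_le _ _
    have h2 : Lip * |t - t0| ≤ Lip * δ := mul_le_mul_of_nonneg_left hd.le hLip0
    have h3 : Lip * δ < ε/2 := by
      have hx : δ * (2*(Lip+1)) = ε := by
        rw [hδdef]; field_simp
      nlinarith [hδ, hLip0]
    have := hk t0 ht0F
    linarith
  -- final assembly
  rw [Metric.tendstoUniformlyOn_iff]
  intro ε hε
  set E : ℝ := Real.exp (Lc * b) with hEdef
  have hE : 0 < E := Real.exp_pos _
  set ε' : ℝ := ε / (2*(E+1)) with hε'def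
  have hε' : 0 < ε' := by positivity
  have hψev : ∀ᶠ k in atTop, ‖ψ k - ψl‖ < ε' := by
    have h0 : Tendsto (fun k => ψ k - ψl) atTop (nhds 0) := by
      simpa using hψ.sub (tendsto_const_nhds (x := ψl))
    exact (NormedAddCommGroup.tendsto_nhds_zero.mp h0) ε' hε'
  filter_upwards [hψev, hrunif ε' hε'] with k hk1 hk2
  intro t ht
  -- Gronwall
  obtain ⟨S0, hS0⟩ := isCompact_Icc.exists_bound_of_continuousOn (hqc k)
  set S : ℝ := max S0 0 with hSdef
  have hSb : ∀ s ∈ Set.Icc (0:ℝ) b, ‖q k s‖ ≤ S := fun s hs =>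
    le_trans (hS0 s hs) (le_max_left _ _)
  have hgron := my_gronwall hb.le (by positivity : (0:ℝ) ≤ 2*ε') hLc0
    (le_max_right S0 0) (fun s => ‖q k s‖) (hqc k).norm.integrableOn_Icc hSb
    (fun s hs => by
      have := hnormineq k s hs
      have h1 := hk1.le
      have h2 := (hk2 s hs).le
      linarith)
  have hfin := hgron t ht
  have hdist : dist (pl t) (p k t) = ‖q k t‖ := by
    rw [dist_eq_norm, ← norm_sub_rev]
  rw [hdist]
  calc ‖q k t‖ ≤ 2*ε' * Real.exp (Lc * b) := hfin
  _ < ε := by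
      rw [← hEdef]
      have hx : ε' * (2*(E+1)) = ε := by
        rw [hε'def]; field_simp
      nlinarith [hε', hE]
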